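/- Let F be a finite field with q elements and g ≥ 1. Consider the group Aff(F) of invertible affine transformations of F, i.e., maps T_{a,b} : x ↦ a·x + b with a ∈ F∖{0}, b ∈ F, under composition. Then the number of 2g-tuples (f₁,…,f_{2g}) of elements of Aff(F) satisfying the surface-group relation ∏_{i=1}^{g} [f_{2i−1}, f_{2i}] = id equals q^{2g−1}·((q−1)^{2g} + q − 1). -/

import Mathlib

/-!
Every `f ∈ Aff(F)` is `x ↦ a x + b` with `a ∈ Fˣ`, and the commutator of `(a, b)` and `(c, d)`
is the translation by `(a - 1) d - (c - 1) b`. Translations commute, so the product of the `g`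
commutators is the translation by the sum of these quantities, and the surface relation says
that a linear form in the translation parts `b ∈ F^{2g}`, with coefficients `± (a_j - 1)` read
off the linear parts, vanishes. That form is zero only when all `a_j = 1`; otherwise its kernel
has `q^{2g-1}` points. Summing over the `(q - 1)^{2g}` choices of linear parts gives
`q^{2g} + ((q - 1)^{2g} - 1) q^{2g-1}`.
-/

open scoped commutatorElement
open Matrix

theorem Module.Dual.natCard_ker_mul_natCard_of_ne_zero {K V : Type*} [Field K]
    [AddCommGroup V] [Module K V] [Module.Finite K V] {f : Module.Dual K V} (hf : f ≠ 0) :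
    Nat.card (LinearMap.ker f) * Nat.card K = Nat.card V := by
  rw [Module.natCard_eq_pow_finrank (K := K) (V := LinearMap.ker f),
    Module.natCard_eq_pow_finrank (K := K) (V := V), ← finrank_ker_add_one_of_ne_zero hf,
    pow_succ]

open Classical in
theorem natCard_dotProduct_eq_zero {K ι : Type*} [Field K] [Fintype K] [Fintype ι] (c : ι → K) :
    Nat.card {v : ι → K // c ⬝ᵥ v = 0} =
      if c = 0 then Fintype.card K ^ Fintype.card ι
      else Fintype.card K ^ (Fintype.card ι - 1) := by
  split_ifs with hc
  · simp [hc, Nat.card_eq_fintype_card]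
  · have hι : Fintype.card ι ≠ 0 := fun h =>
      hc (funext fun i => (Fintype.card_eq_zero_iff.mp h).elim i)
    have h := Module.Dual.natCard_ker_mul_natCard_of_ne_zero
      ((dotProductEquiv K ι).map_ne_zero_iff.mpr hc)
    rw [Nat.card_eq_fintype_card (α := K), Nat.card_eq_fintype_card (α := ι → K),
      Fintype.card_fun, ← Nat.sub_one_add_one hι, pow_succ] at h
    exact Nat.eq_of_mul_eq_mul_right Fintype.card_pos h

namespace AffineEquiv

section AffineSpace

variable {k V P : Type*} [Ring k] [AddCommGroup V] [Module k V] [AddTorsor V P]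

theorem list_prod_map_constVAdd (L : List V) :
    (L.map (constVAdd k P)).prod = constVAdd k P L.sum := by
  induction L with
  | nil => exact (constVAdd_zero k P).symm
  | cons v L ih => rw [List.map_cons, List.prod_cons, ih, List.sum_cons, constVAdd_add]; rfl

theorem constVAdd_eq_one_iff [Nonempty P] {v : V} : constVAdd k P v = 1 ↔ v = 0 := by
  refine ⟨fun h => ?_, fun h => by rw [h, constVAdd_zero]; rfl⟩
  obtain ⟨p⟩ := ‹Nonempty P›
  have hp : v +ᵥ p = p := congr($h p)
  rw [← vadd_vsub v p, hp, vsub_self]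

end AffineSpace

variable {F : Type*} [Field F]

theorem apply_eq_linear_one_mul_add (f : F ≃ᵃ[F] F) (x : F) : f x = f.linear 1 * x + f 0 := by
  have h := f.map_vadd 0 x
  rw [vadd_eq_add, vadd_eq_add, add_zero] at h
  rw [h, show f.linear x = f.linear (x • 1) by rw [smul_eq_mul, mul_one], map_smul, smul_eq_mul,
    mul_comm]

theorem linear_one_ne_zero (f : F ≃ᵃ[F] F) : f.linear 1 ≠ 0 :=
  f.linear.map_ne_zero_iff.mpr one_ne_zero

def equivUnitsProd : (F ≃ᵃ[F] F) ≃ Fˣ × F where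
  toFun f := (Units.mk0 _ f.linear_one_ne_zero, f 0)
  invFun p := (LinearEquiv.smulOfUnit p.1).toAffineEquiv.trans (constVAdd F F p.2)
  left_inv f := by
    ext x
    simp [LinearEquiv.smulOfUnit, apply_eq_linear_one_mul_add f x, add_comm]
  right_inv p := by
    ext
    · exact mul_one (p.1 : F)
    · simp [LinearEquiv.smulOfUnit]

def commutatorTranslation (f g : F ≃ᵃ[F] F) : F :=
  (f.linear 1 - 1) * g 0 - (g.linear 1 - 1) * f 0

theorem commutatorElement_eq_constVAdd (f g : F ≃ᵃ[F] F) :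
    ⁅f, g⁆ = constVAdd F F (commutatorTranslation f g) := by
  rw [commutatorElement_def, mul_inv_eq_iff_eq_mul, mul_inv_eq_iff_eq_mul]
  ext x
  simp only [coe_mul, Function.comp_apply, constVAdd_apply, vadd_eq_add]
  rw [apply_eq_linear_one_mul_add f (g x), apply_eq_linear_one_mul_add g (f x),
    apply_eq_linear_one_mul_add f x, apply_eq_linear_one_mul_add g x, commutatorTranslation]
  ring

theorem list_prod_commutatorElement_eq_one_iff {α : Type*} (L : List α)
    (u v : α → F ≃ᵃ[F] F) :
    (L.map fun i => ⁅u i, v i⁆).prod = 1 ↔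
      (L.map fun i => commutatorTranslation (u i) (v i)).sum = 0 := by
  simp_rw [commutatorElement_eq_constVAdd]
  rw [← constVAdd_eq_one_iff (k := F) (P := F), ← list_prod_map_constVAdd, List.map_map]
  rfl

end AffineEquiv

section SurfaceRelation

open AffineEquiv

variable {F κ : Type*} [Field F]

def commutatorCoeff (a : κ × Fin 2 → Fˣ) : κ × Fin 2 → F :=
  fun j => ![1 - (a (j.1, 1) : F), (a (j.1, 0) : F) - 1] j.2

theorem commutatorCoeff_dotProduct [Fintype κ] (a : κ × Fin 2 → Fˣ) (b : κ × Fin 2 → F) :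
    commutatorCoeff a ⬝ᵥ b =
      ∑ i, (((a (i, 0) : F) - 1) * b (i, 1) - ((a (i, 1) : F) - 1) * b (i, 0)) := by
  rw [dotProduct, Fintype.sum_prod_type]
  refine Finset.sum_congr rfl fun i _ => ?_
  simp only [commutatorCoeff, Fin.sum_univ_two, Matrix.cons_val_zero, Matrix.cons_val_one,
    Matrix.cons_val_fin_one]
  ring

theorem commutatorCoeff_eq_zero_iff {a : κ × Fin 2 → Fˣ} : commutatorCoeff a = 0 ↔ a = 1 := by
  simp only [funext_iff, Prod.forall, Fin.forall_fin_two, commutatorCoeff, Pi.zero_apply,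
    Pi.one_apply, Units.ext_iff, Units.val_one, Matrix.cons_val_zero, Matrix.cons_val_one,
    sub_eq_zero, @eq_comm F 1, forall_and]
  exact and_comm

open Classical in
theorem card_sum_commutatorTranslation_eq_zero [Fintype F] [Fintype κ] [Nonempty κ] :
    Nat.card {f : κ × Fin 2 → F ≃ᵃ[F] F //
        ∑ i, commutatorTranslation (f (i, 0)) (f (i, 1)) = 0} =
      Fintype.card F ^ (2 * Fintype.card κ - 1) *
        ((Fintype.card F - 1) ^ (2 * Fintype.card κ) + Fintype.card F - 1) := by
  set q := Fintype.card F
  set n := Fintype.card (κ × Fin 2)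
  have hn : n = 2 * Fintype.card κ := by simp [n, mul_comm]
  calc _ = Nat.card {p : (κ × Fin 2 → Fˣ) × (κ × Fin 2 → F) //
          commutatorCoeff p.1 ⬝ᵥ p.2 = 0} := by
        refine Nat.card_congr (((Equiv.piCongrRight fun _ => equivUnitsProd).trans
          (Equiv.arrowProdEquivProdArrow _ _ _)).subtypeEquiv fun f => ?_)
        rw [commutatorCoeff_dotProduct]
        rfl
    _ = ∑ a : κ × Fin 2 → Fˣ, Nat.card {b : κ × Fin 2 → F // commutatorCoeff a ⬝ᵥ b = 0} := by
        rw [Nat.card_congr (Equiv.subtypeProdEquivSigmaSubtype fun a b =>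
          commutatorCoeff a ⬝ᵥ b = 0), Nat.card_sigma]
    _ = ∑ a : κ × Fin 2 → Fˣ, if a = 1 then q ^ n else q ^ (n - 1) := by
        simp only [natCard_dotProduct_eq_zero, commutatorCoeff_eq_zero_iff]
        rfl
    _ = q ^ n + ((q - 1) ^ n - 1) * q ^ (n - 1) := by
        rw [← Finset.add_sum_erase _ _ (Finset.mem_univ 1), if_pos rfl,
          Finset.sum_congr rfl fun a ha => if_neg (Finset.ne_of_mem_erase ha),
          Finset.sum_const, Finset.card_erase_of_mem (Finset.mem_univ _), Finset.card_univ,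
          Fintype.card_fun, Fintype.card_units, smul_eq_mul]
    _ = _ := by
        have hq : 2 ≤ q := Fintype.one_lt_card
        have hκ := Fintype.card_pos (α := κ)
        obtain ⟨m, hm⟩ : ∃ m, n = m + 1 := ⟨n - 1, by omega⟩
        have h1 : 1 ≤ (q - 1) ^ (m + 1) := Nat.one_le_pow _ _ (by omega)
        rw [← hn, hm, Nat.add_sub_cancel]
        zify [h1, (by omega : 1 ≤ q), (by omega : 1 ≤ (q - 1) ^ (m + 1) + q)]
        ring

end SurfaceRelation

/-- For a finite field `F` with `q` elements and `g ≥ 1`, the number of `2g`-tuples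
`(f₁,…,f_{2g})` of elements of the affine group `Aff(F) = (F ≃ᵃ[F] F)` satisfying the
surface-group relation `∏_{i=1}^{g} [f_{2i−1}, f_{2i}] = id` (indices here from `0`)
equals `q^{2g−1}·((q−1)^{2g} + q − 1)`. -/
theorem card_surfaceRep_aff_finite_field (F : Type*) [Field F] [Fintype F] (q : ℕ)
    (hq : Fintype.card F = q) (g : ℕ) (hg : 1 ≤ g) :
    Nat.card {f : Fin (2 * g) → (F ≃ᵃ[F] F) //
        ((List.finRange g).map fun i =>
            ⁅f ⟨2 * i.1, by have := i.isLt; omega⟩,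
              f ⟨2 * i.1 + 1, by have := i.isLt; omega⟩⁆).prod = 1} =
      q ^ (2 * g - 1) * ((q - 1) ^ (2 * g) + q - 1) := by
  subst hq
  have : Nonempty (Fin g) := ⟨⟨0, hg⟩⟩
  let e : Fin g × Fin 2 ≃ Fin (2 * g) := finProdFinEquiv.trans (finCongr (mul_comm g 2))
  have he : ∀ i k, e (i, k) = ⟨2 * i + k, by omega⟩ := fun i k => Fin.ext <| by
    simp only [e, Equiv.trans_apply, finCongr_apply, Fin.val_cast, finProdFinEquiv_apply_val]
    ring
  have hcount := card_sum_commutatorTranslation_eq_zero (F := F) (κ := Fin g)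
  rw [Fintype.card_fin] at hcount
  rw [← hcount]
  refine Nat.card_congr ((e.arrowCongr (Equiv.refl _)).symm.subtypeEquiv fun f => ?_)
  rw [AffineEquiv.list_prod_commutatorElement_eq_one_iff, ← Fin.sum_univ_def]
  simp [he]
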